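/- (Proposition 4.1, asymptotics of the algebraic two-soliton in the k2-frame) With F1(x,t) = A1(x,t)/B1(x,t) and F3(x,t) = A2(x,t)/B2(x,t) as in the context, for every X2 ∈ ℝ the function t ↦ F1(X2 + t/k2⁴, t) tends to 4k2²/(1 + 4k2⁴·X2²) as t → +∞ and as t → −∞, and the function t ↦ F3(X2 + t/k2⁴, t) tends to 4/(k2²·(1 + 4k2⁴·X2²)) as t → +∞ and as t → −∞. -/

import Mathlib

/-!
Along the line `x = X2 + t/k2⁴` the coefficients `M3`, `N1` are constant, while `M1`, `N3`,
`M5`, `M6` are affine in `t` (the `t²` terms of `M6` cancel). Up to a unimodular phase factor the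
numerators are `4(k1² - k2²)²·|affine + bounded|²`, and the common denominator `B1 = B2` is
`|affine + bounded|²`. Hence both are `c·t² + O(t)` as `|t| → ∞`, and the envelopes tend to
the ratio of the leading coefficients.
-/

open Real Filter

noncomputable section AlgebraicTwoSoliton

/-- Phase `θ1 = −(t + k1⁴x)/k1²`. -/
def th1 (k1 : ℝ) (p : ℝ × ℝ) : ℝ := -(p.2 + k1 ^ 4 * p.1) / k1 ^ 2

/-- Phase `θ2 = −(t + k2⁴x)/k2²`. -/
def th2 (k2 : ℝ) (p : ℝ × ℝ) : ℝ := -(p.2 + k2 ^ 4 * p.1) / k2 ^ 2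

def M1 (k1 k2 : ℝ) (p : ℝ × ℝ) : ℝ :=
  2 * k2 ^ 3 * (k1 ^ 2 - k2 ^ 2) * (k1 ^ 4 * p.1 - p.2)

def M2 (k1 k2 : ℝ) : ℝ := -(k1 ^ 2 * k2 ^ 3 * (3 * k1 ^ 2 + k2 ^ 2))

def M3 (k1 k2 : ℝ) (p : ℝ × ℝ) : ℝ :=
  2 * k1 ^ 3 * (k1 ^ 2 - k2 ^ 2) * (k2 ^ 4 * p.1 - p.2)

def M4 (k1 k2 : ℝ) : ℝ := k1 ^ 3 * k2 ^ 2 * (k1 ^ 2 + 3 * k2 ^ 2)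

def M5 (k1 k2 : ℝ) (p : ℝ × ℝ) : ℝ :=
  2 * (k1 ^ 2 - k2 ^ 2) ^ 2 * (k1 ^ 2 + k2 ^ 2) * (k1 ^ 2 * k2 ^ 2 * p.1 - p.2)

def M6 (k1 k2 : ℝ) (p : ℝ × ℝ) : ℝ :=
  k1 ^ 6 * k2 ^ 2 + 6 * k1 ^ 4 * k2 ^ 4 + k1 ^ 2 * k2 ^ 6
    - 4 * (k1 ^ 2 - k2 ^ 2) ^ 2 * p.2 ^ 2
    + 4 * (k1 ^ 2 - k2 ^ 2) ^ 2 * (k1 ^ 4 + k2 ^ 4) * p.2 * p.1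
    - 4 * k1 ^ 4 * k2 ^ 4 * (k1 ^ 2 - k2 ^ 2) ^ 2 * p.1 ^ 2

def N1 (k1 k2 : ℝ) (p : ℝ × ℝ) : ℝ :=
  2 * k1 * (k1 ^ 2 - k2 ^ 2) * (k2 ^ 4 * p.1 - p.2)

def N2 (k1 k2 : ℝ) : ℝ := 3 * k1 ^ 3 * k2 ^ 2 + k1 * k2 ^ 4

def N3 (k1 k2 : ℝ) (p : ℝ × ℝ) : ℝ :=
  2 * k2 * (k1 ^ 2 - k2 ^ 2) * (k1 ^ 4 * p.1 - p.2)

def N4 (k1 k2 : ℝ) : ℝ := -(k1 ^ 4 * k2) - 3 * k1 ^ 2 * k2 ^ 3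

def N5 (k1 k2 : ℝ) (p : ℝ × ℝ) : ℝ :=
  2 * (k1 ^ 2 - k2 ^ 2) ^ 2 * (k1 ^ 2 + k2 ^ 2) * (k1 ^ 2 * k2 ^ 2 * p.1 - p.2)

def N6 (k1 k2 : ℝ) (p : ℝ × ℝ) : ℝ :=
  -(k1 ^ 6 * k2 ^ 2) - 6 * k1 ^ 4 * k2 ^ 4 - k1 ^ 2 * k2 ^ 6
    + 4 * (k1 ^ 2 - k2 ^ 2) ^ 2 * p.2 ^ 2
    - 4 * (k1 ^ 2 - k2 ^ 2) ^ 2 * (k1 ^ 4 + k2 ^ 4) * p.2 * p.1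
    + 4 * k1 ^ 4 * k2 ^ 4 * (k1 ^ 2 - k2 ^ 2) ^ 2 * p.1 ^ 2

/-- Numerator of the squared envelope `|q1|²`. -/
def A1 (k1 k2 : ℝ) (p : ℝ × ℝ) : ℝ :=
  4 * (k1 ^ 2 - k2 ^ 2) ^ 2 *
    ((M1 k1 k2 p * cos (th1 k1 p) - M2 k1 k2 * sin (th1 k1 p)
        + M3 k1 k2 p * cos (th2 k2 p) - M4 k1 k2 * sin (th2 k2 p)) ^ 2
      + (M1 k1 k2 p * sin (th1 k1 p) + M2 k1 k2 * cos (th1 k1 p)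
        + M3 k1 k2 p * sin (th2 k2 p) + M4 k1 k2 * cos (th2 k2 p)) ^ 2)

/-- Denominator of the squared envelope `|q1|²`. -/
def B1 (k1 k2 : ℝ) (p : ℝ × ℝ) : ℝ :=
  (M5 k1 k2 p - 4 * k1 ^ 5 * k2 ^ 3 * sin (th2 k2 p - th1 k1 p)
      + 4 * k1 ^ 3 * k2 ^ 5 * sin (th2 k2 p - th1 k1 p)) ^ 2
    + (M6 k1 k2 p - 4 * k1 ^ 5 * k2 ^ 3 * cos (th2 k2 p - th1 k1 p)
      - 4 * k1 ^ 3 * k2 ^ 5 * cos (th2 k2 p - th1 k1 p)) ^ 2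

/-- Numerator of the squared envelope `|q3|²`. -/
def A2 (k1 k2 : ℝ) (p : ℝ × ℝ) : ℝ :=
  4 * (k1 ^ 2 - k2 ^ 2) ^ 2 *
    ((N1 k1 k2 p * cos (th1 k1 p) + N2 k1 k2 * sin (th1 k1 p)
        + N3 k1 k2 p * cos (th2 k2 p) + N4 k1 k2 * sin (th2 k2 p)) ^ 2
      + (-(N1 k1 k2 p) * sin (th1 k1 p) + N2 k1 k2 * cos (th1 k1 p)
        - N3 k1 k2 p * sin (th2 k2 p) + N4 k1 k2 * cos (th2 k2 p)) ^ 2)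

/-- Denominator of the squared envelope `|q3|²`. -/
def B2 (k1 k2 : ℝ) (p : ℝ × ℝ) : ℝ :=
  (N5 k1 k2 p + 4 * k1 ^ 5 * k2 ^ 3 * sin (th1 k1 p - th2 k2 p)
      - 4 * k1 ^ 3 * k2 ^ 5 * sin (th1 k1 p - th2 k2 p)) ^ 2
    + (N6 k1 k2 p + 4 * k1 ^ 5 * k2 ^ 3 * cos (th1 k1 p - th2 k2 p)
      + 4 * k1 ^ 3 * k2 ^ 5 * cos (th1 k1 p - th2 k2 p)) ^ 2

/-- The squared envelope `|q1|² = A1/B1` of the algebraic two-soliton. -/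
def F1 (k1 k2 : ℝ) (p : ℝ × ℝ) : ℝ := A1 k1 k2 p / B1 k1 k2 p

/-- The squared envelope `|q3|² = A2/B2` of the algebraic two-soliton. -/
def F3 (k1 k2 : ℝ) (p : ℝ × ℝ) : ℝ := A2 k1 k2 p / B2 k1 k2 p

end AlgebraicTwoSoliton

open Topology Asymptotics Bornology IsOrderBornology

lemma isBigO_one_const_add_mul_cos_add_mul_sin {α : Type*} {l : Filter α} (b c s : ℝ)
    (φ : α → ℝ) :
    (fun x => b + c * cos (φ x) + s * sin (φ x)) =O[l] (fun _ => (1 : ℝ)) := by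
  have hcos : (fun x => cos (φ x)) =O[l] (fun _ => (1 : ℝ)) :=
    .of_bound 1 (.of_forall fun x => by simpa using abs_cos_le_one (φ x))
  have hsin : (fun x => sin (φ x)) =O[l] (fun _ => (1 : ℝ)) :=
    .of_bound 1 (.of_forall fun x => by simpa using abs_sin_le_one (φ x))
  exact ((isBigO_const_one ℝ b l).add (hcos.const_mul_left c)).add (hsin.const_mul_left s)

lemma tendsto_div_cobounded_of_sub_mul_isBigO_one {u : ℝ → ℝ} {a : ℝ}
    (hu : (fun t => u t - a * t) =O[cobounded ℝ] (fun _ => (1 : ℝ))) :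
    Tendsto (fun t => u t / t) (cobounded ℝ) (𝓝 a) := by
  have hrem : Tendsto (fun t => (u t - a * t) * t⁻¹) (cobounded ℝ) (𝓝 0) := by
    refine ((hu.mul (isBigO_refl (fun t : ℝ => t⁻¹) _)).trans_tendsto ?_)
    simpa using tendsto_inv₀_cobounded (α := ℝ)
  have hlim := hrem.const_add a
  rw [add_zero] at hlim
  refine hlim.congr' ?_
  filter_upwards [eventually_ne_cobounded 0] with t ht
  field_simp
  ring

lemma tendsto_sq_add_sq_div_sq_cobounded {u v : ℝ → ℝ} {a b : ℝ}
    (hu : (fun t => u t - a * t) =O[cobounded ℝ] (fun _ => (1 : ℝ)))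
    (hv : (fun t => v t - b * t) =O[cobounded ℝ] (fun _ => (1 : ℝ))) :
    Tendsto (fun t => (u t ^ 2 + v t ^ 2) / t ^ 2) (cobounded ℝ) (𝓝 (a ^ 2 + b ^ 2)) := by
  simpa only [add_div, div_pow] using
    ((tendsto_div_cobounded_of_sub_mul_isBigO_one hu).pow 2).add
      ((tendsto_div_cobounded_of_sub_mul_isBigO_one hv).pow 2)

section Envelopes

variable (k1 k2 : ℝ) (p : ℝ × ℝ)

-- `A1 = 4(k1² - k2²)²·|(M1 + iM2)e^{iθ1} + (M3 + iM4)e^{iθ2}|²`; factor out `e^{iθ1}`.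
-- Likewise `A2 = 4(k1² - k2²)²·|(N1 + iN2)e^{-iθ1} + (N3 + iN4)e^{-iθ2}|²`; factor out `e^{-iθ2}`.
lemma A1_eq : A1 k1 k2 p = 4 * (k1 ^ 2 - k2 ^ 2) ^ 2 *
    ((M1 k1 k2 p + M3 k1 k2 p * cos (th2 k2 p - th1 k1 p)
        - M4 k1 k2 * sin (th2 k2 p - th1 k1 p)) ^ 2
      + (M2 k1 k2 + M3 k1 k2 p * sin (th2 k2 p - th1 k1 p)
        + M4 k1 k2 * cos (th2 k2 p - th1 k1 p)) ^ 2) := by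
  rw [A1, cos_sub, sin_sub]
  linear_combination 4 * (k1 ^ 2 - k2 ^ 2) ^ 2 * (M1 k1 k2 p ^ 2 + M2 k1 k2 ^ 2
    - (M3 k1 k2 p ^ 2 + M4 k1 k2 ^ 2) * (sin (th2 k2 p) ^ 2 + cos (th2 k2 p) ^ 2))
    * sin_sq_add_cos_sq (th1 k1 p)

lemma A2_eq : A2 k1 k2 p = 4 * (k1 ^ 2 - k2 ^ 2) ^ 2 *
    ((N3 k1 k2 p + N1 k1 k2 p * cos (th2 k2 p - th1 k1 p)
        - N2 k1 k2 * sin (th2 k2 p - th1 k1 p)) ^ 2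
      + (N4 k1 k2 + N1 k1 k2 p * sin (th2 k2 p - th1 k1 p)
        + N2 k1 k2 * cos (th2 k2 p - th1 k1 p)) ^ 2) := by
  rw [A2, cos_sub, sin_sub]
  linear_combination 4 * (k1 ^ 2 - k2 ^ 2) ^ 2 * (N3 k1 k2 p ^ 2 + N4 k1 k2 ^ 2
    - (N1 k1 k2 p ^ 2 + N2 k1 k2 ^ 2) * (sin (th1 k1 p) ^ 2 + cos (th1 k1 p) ^ 2))
    * sin_sq_add_cos_sq (th2 k2 p)

lemma B2_eq_B1 : B2 k1 k2 p = B1 k1 k2 p := by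
  rw [B1, B2, N5, N6, M5, M6, ← neg_sub (th2 k2 p), sin_neg, cos_neg]
  ring

end Envelopes

lemma tendsto_div_of_div_sq_cobounded {f g : ℝ → ℝ} {x y : ℝ}
    (hf : Tendsto (fun t => f t / t ^ 2) (cobounded ℝ) (𝓝 x))
    (hg : Tendsto (fun t => g t / t ^ 2) (cobounded ℝ) (𝓝 y)) (hy : y ≠ 0) :
    Tendsto (fun t => f t / g t) (cobounded ℝ) (𝓝 (x / y)) := by
  refine (hf.div hg hy).congr' ?_
  filter_upwards [eventually_ne_cobounded 0] with t ht
  exact div_div_div_cancel_right₀ (pow_ne_zero 2 ht) _ _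

noncomputable def k2Frame (k2 X2 t : ℝ) : ℝ × ℝ := (X2 + t / k2 ^ 4, t)

section K2Frame

variable (k1 : ℝ) {k2 : ℝ} (X2 : ℝ)

lemma tendsto_A1_k2Frame_div_sq (hk2 : k2 ≠ 0) :
    Tendsto (fun t => A1 k1 k2 (k2Frame k2 X2 t) / t ^ 2) (cobounded ℝ)
      (𝓝 (4 * (k1 ^ 2 - k2 ^ 2) ^ 2 *
        ((2 * (k1 ^ 2 - k2 ^ 2) * (k1 ^ 4 - k2 ^ 4) / k2) ^ 2 + 0 ^ 2))) := by
  let φ t := th2 k2 (k2Frame k2 X2 t) - th1 k1 (k2Frame k2 X2 t)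
  simp only [A1_eq, mul_div_assoc]
  refine (tendsto_sq_add_sq_div_sq_cobounded ?_ ?_).const_mul _
  · exact (isBigO_one_const_add_mul_cos_add_mul_sin (M1 k1 k2 (X2, 0)) (M3 k1 k2 (X2, 0))
      (-M4 k1 k2) φ).congr_left fun t => by simp only [M1, M3, k2Frame, φ]; field_simp; ring
  · exact (isBigO_one_const_add_mul_cos_add_mul_sin (M2 k1 k2) (M4 k1 k2)
      (M3 k1 k2 (X2, 0)) φ).congr_left fun t => by simp only [M3, k2Frame, φ]; field_simp; ring

lemma tendsto_A2_k2Frame_div_sq (hk2 : k2 ≠ 0) :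
    Tendsto (fun t => A2 k1 k2 (k2Frame k2 X2 t) / t ^ 2) (cobounded ℝ)
      (𝓝 (4 * (k1 ^ 2 - k2 ^ 2) ^ 2 *
        ((2 * (k1 ^ 2 - k2 ^ 2) * (k1 ^ 4 - k2 ^ 4) / k2 ^ 3) ^ 2 + 0 ^ 2))) := by
  let φ t := th2 k2 (k2Frame k2 X2 t) - th1 k1 (k2Frame k2 X2 t)
  simp only [A2_eq, mul_div_assoc]
  refine (tendsto_sq_add_sq_div_sq_cobounded ?_ ?_).const_mul _
  · exact (isBigO_one_const_add_mul_cos_add_mul_sin (N3 k1 k2 (X2, 0)) (N1 k1 k2 (X2, 0))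
      (-N2 k1 k2) φ).congr_left fun t => by simp only [N1, N3, k2Frame, φ]; field_simp; ring
  · exact (isBigO_one_const_add_mul_cos_add_mul_sin (N4 k1 k2) (N2 k1 k2)
      (N1 k1 k2 (X2, 0)) φ).congr_left fun t => by simp only [N1, k2Frame, φ]; field_simp; ring

lemma tendsto_B1_k2Frame_div_sq (hk2 : k2 ≠ 0) :
    Tendsto (fun t => B1 k1 k2 (k2Frame k2 X2 t) / t ^ 2) (cobounded ℝ)
      (𝓝 ((2 * (k1 ^ 2 - k2 ^ 2) ^ 3 * (k1 ^ 2 + k2 ^ 2) / k2 ^ 2) ^ 2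
        + (4 * (k1 ^ 2 - k2 ^ 2) ^ 2 * (k2 ^ 4 - k1 ^ 4) * X2) ^ 2)) := by
  let φ t := th2 k2 (k2Frame k2 X2 t) - th1 k1 (k2Frame k2 X2 t)
  refine tendsto_sq_add_sq_div_sq_cobounded ?_ ?_
  · exact (isBigO_one_const_add_mul_cos_add_mul_sin (M5 k1 k2 (X2, 0)) 0
      (4 * k1 ^ 3 * k2 ^ 5 - 4 * k1 ^ 5 * k2 ^ 3) φ).congr_left fun t => by
        simp only [M5, k2Frame, φ]; field_simp; ring
  · exact (isBigO_one_const_add_mul_cos_add_mul_sin (M6 k1 k2 (X2, 0))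
      (-(4 * k1 ^ 5 * k2 ^ 3 + 4 * k1 ^ 3 * k2 ^ 5)) 0 φ).congr_left fun t => by
        simp only [M6, k2Frame, φ]; field_simp; ring

lemma B1_k2Frame_limit_ne_zero (hk2 : k2 ≠ 0) (hkk : k1 ^ 2 ≠ k2 ^ 2) :
    (2 * (k1 ^ 2 - k2 ^ 2) ^ 3 * (k1 ^ 2 + k2 ^ 2) / k2 ^ 2) ^ 2
      + (4 * (k1 ^ 2 - k2 ^ 2) ^ 2 * (k2 ^ 4 - k1 ^ 4) * X2) ^ 2 ≠ 0 := by
  have : k1 ^ 2 - k2 ^ 2 ≠ 0 := sub_ne_zero.mpr hkk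
  positivity

lemma tendsto_F1_k2Frame (hk2 : k2 ≠ 0) (hkk : k1 ^ 2 ≠ k2 ^ 2) :
    Tendsto (fun t => F1 k1 k2 (k2Frame k2 X2 t)) (cobounded ℝ)
      (𝓝 (4 * k2 ^ 2 / (1 + 4 * k2 ^ 4 * X2 ^ 2))) := by
  simp only [F1]
  convert tendsto_div_of_div_sq_cobounded (tendsto_A1_k2Frame_div_sq k1 X2 hk2)
    (tendsto_B1_k2Frame_div_sq k1 X2 hk2) (B1_k2Frame_limit_ne_zero k1 X2 hk2 hkk) using 2
  have : k1 ^ 2 - k2 ^ 2 ≠ 0 := sub_ne_zero.mpr hkk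
  have : k1 ^ 2 + k2 ^ 2 ≠ 0 := by positivity
  field_simp
  ring

lemma tendsto_F3_k2Frame (hk2 : k2 ≠ 0) (hkk : k1 ^ 2 ≠ k2 ^ 2) :
    Tendsto (fun t => F3 k1 k2 (k2Frame k2 X2 t)) (cobounded ℝ)
      (𝓝 (4 / (k2 ^ 2 * (1 + 4 * k2 ^ 4 * X2 ^ 2)))) := by
  simp only [F3, B2_eq_B1]
  convert tendsto_div_of_div_sq_cobounded (tendsto_A2_k2Frame_div_sq k1 X2 hk2)
    (tendsto_B1_k2Frame_div_sq k1 X2 hk2) (B1_k2Frame_limit_ne_zero k1 X2 hk2 hkk) using 2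
  have : k1 ^ 2 - k2 ^ 2 ≠ 0 := sub_ne_zero.mpr hkk
  have : k1 ^ 2 + k2 ^ 2 ≠ 0 := by positivity
  field_simp
  ring

end K2Frame

theorem algebraicTwoSoliton_asymptotics_k2_frame_general (k1 k2 : ℝ)
    (hk2 : k2 ≠ 0) (hkk : k1 ^ 2 ≠ k2 ^ 2) (X2 : ℝ) :
    (Tendsto (fun t : ℝ => F1 k1 k2 (X2 + t / k2 ^ 4, t)) atTop
        (nhds (4 * k2 ^ 2 / (1 + 4 * k2 ^ 4 * X2 ^ 2))) ∧
      Tendsto (fun t : ℝ => F1 k1 k2 (X2 + t / k2 ^ 4, t)) atBot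
        (nhds (4 * k2 ^ 2 / (1 + 4 * k2 ^ 4 * X2 ^ 2)))) ∧
    (Tendsto (fun t : ℝ => F3 k1 k2 (X2 + t / k2 ^ 4, t)) atTop
        (nhds (4 / (k2 ^ 2 * (1 + 4 * k2 ^ 4 * X2 ^ 2)))) ∧
      Tendsto (fun t : ℝ => F3 k1 k2 (X2 + t / k2 ^ 4, t)) atBot
        (nhds (4 / (k2 ^ 2 * (1 + 4 * k2 ^ 4 * X2 ^ 2))))) := by
  have hF1 := tendsto_F1_k2Frame k1 X2 hk2 hkk
  have hF3 := tendsto_F3_k2Frame k1 X2 hk2 hkk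
  exact ⟨⟨hF1.mono_left atTop_le_cobounded, hF1.mono_left atBot_le_cobounded⟩,
    hF3.mono_left atTop_le_cobounded, hF3.mono_left atBot_le_cobounded⟩

/-- Proposition 4.1 (k2-frame asymptotics): along `x = X2 + t/k2⁴`, the squared
envelopes of the algebraic two-soliton tend to the one-soliton profiles as
`t → ±∞`. -/
theorem algebraicTwoSoliton_asymptotics_k2_frame (k1 k2 : ℝ)
    (hk1 : k1 ≠ 0) (hk2 : k2 ≠ 0) (hkk : k1 ^ 2 ≠ k2 ^ 2) (X2 : ℝ) :
    (Tendsto (fun t : ℝ => F1 k1 k2 (X2 + t / k2 ^ 4, t)) atTop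
        (nhds (4 * k2 ^ 2 / (1 + 4 * k2 ^ 4 * X2 ^ 2))) ∧
      Tendsto (fun t : ℝ => F1 k1 k2 (X2 + t / k2 ^ 4, t)) atBot
        (nhds (4 * k2 ^ 2 / (1 + 4 * k2 ^ 4 * X2 ^ 2)))) ∧
    (Tendsto (fun t : ℝ => F3 k1 k2 (X2 + t / k2 ^ 4, t)) atTop
        (nhds (4 / (k2 ^ 2 * (1 + 4 * k2 ^ 4 * X2 ^ 2)))) ∧
      Tendsto (fun t : ℝ => F3 k1 k2 (X2 + t / k2 ^ 4, t)) atBot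
        (nhds (4 / (k2 ^ 2 * (1 + 4 * k2 ^ 4 * X2 ^ 2))))) :=
  algebraicTwoSoliton_asymptotics_k2_frame_general k1 k2 hk2 hkk X2
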